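/- arXiv:1508.02594 — 5 statements merged into one kernel-verified Lean document; each statement's English description precedes it below -/
import Mathlib

section
/- For any positive integer n, the connected safe number of K_2 □ K_n equals n. -/
open SimpleGraph

noncomputable section

/-- The Cartesian (box) product of the complete graphs `K_m` and `K_n`. -/
def KK (m n : ℕ) : SimpleGraph (Fin m × Fin n) :=
  (⊤ : SimpleGraph (Fin m)) □ (⊤ : SimpleGraph (Fin n))

variable {V : Type*}

/-- `S` is a safe set of `G`: every component of `G[S]` is at least as large as
every component of `G - S` joined to it by an edge. -/
def IsSafeSet (G : SimpleGraph V) (S : Finset V) : Prop :=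
  ∀ C : (G.induce (S : Set V)).ConnectedComponent,
    ∀ D : (G.induce ((S : Set V)ᶜ)).ConnectedComponent,
      (∃ u ∈ C.supp, ∃ v ∈ D.supp, G.Adj u.1 v.1) →
        Nat.card D.supp ≤ Nat.card C.supp

/-- A connected safe set: a safe set inducing a connected subgraph. -/
def IsConnectedSafeSet (G : SimpleGraph V) (S : Finset V) : Prop :=
  IsSafeSet G S ∧ (G.induce (S : Set V)).Connected

/-- The safe number `s(G)`. -/
def safeNumber (G : SimpleGraph V) : ℕ :=
  sInf {k | ∃ S : Finset V, IsSafeSet G S ∧ S.card = k}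

/-- The connected safe number `cs(G)`. -/
def connectedSafeNumber (G : SimpleGraph V) : ℕ :=
  sInf {k | ∃ S : Finset V, IsConnectedSafeSet G S ∧ S.card = k}

/-- `S` is a vertex cut: `G - S` is disconnected. -/
def IsVertexCut (G : SimpleGraph V) (S : Finset V) : Prop :=
  ¬ (G.induce ((S : Set V)ᶜ)).Preconnected

end

lemma aux_supp_univ {W : Type*} {G : SimpleGraph W} (h : G.Preconnected)
    (C : G.ConnectedComponent) : C.supp = Set.univ := by
  ext v
  simp only [ConnectedComponent.mem_supp_iff, Set.mem_univ, iff_true]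
  obtain ⟨w, rfl⟩ := C.exists_rep
  exact ConnectedComponent.sound (h v w)

lemma aux_supp_card {W : Type*} {G : SimpleGraph W} {A : Set W} (h : (G.induce A).Preconnected)
    (C : (G.induce A).ConnectedComponent) : Nat.card C.supp = A.ncard := by
  rw [aux_supp_univ h C, Nat.card_coe_set_eq, Set.ncard_univ, Nat.card_coe_set_eq]

lemma aux_induce_adj {W : Type*} {G : SimpleGraph W} {s : Set W} {a b : s}
    (h : G.Adj a b) : (G.induce s).Adj a b := by simpa [SimpleGraph.induce] using h

lemma KK_adj {m n : ℕ} {x y : Fin m × Fin n} :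
    (KK m n).Adj x y ↔ (x.1 ≠ y.1 ∧ x.2 = y.2) ∨ (x.2 ≠ y.2 ∧ x.1 = y.1) := by
  simp [KK, boxProd_adj]

lemma card_V (n : ℕ) : Nat.card (Fin 2 × Fin n) = 2 * n := by
  simp [Nat.card_eq_fintype_card]

theorem connected_safe_number_K2_boxProd_Kn (n : ℕ) (hn : 0 < n) :
    connectedSafeNumber (KK 2 n) = n := by
  classical
  set V := Fin 2 × Fin n
  -- the witness set: row 0
  set S₀ : Finset V := ({0} : Finset (Fin 2)) ×ˢ (Finset.univ : Finset (Fin n)) with hS₀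
  have hmemS₀ : ∀ p : V, p ∈ (S₀ : Set V) ↔ p.1 = 0 := by
    intro p
    simp only [hS₀, Finset.coe_product, Finset.mem_coe, Set.mem_prod, Finset.coe_singleton,
      Set.mem_singleton_iff, Set.mem_univ, and_true, Finset.mem_singleton]
    rw [Finset.mem_product]
    simp
  have hcardS₀ : S₀.card = n := by simp [hS₀]
  have hz : (⟨0, hn⟩ : Fin n) = ⟨0, hn⟩ := rfl
  -- preconnectedness of a row
  have rowpre : ∀ (A : Set V) (i : Fin 2), (∀ p : V, p ∈ A ↔ p.1 = i) →
      ((KK 2 n).induce A).Preconnected := by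
    intro A i hA u v
    by_cases huv : u = v
    · rw [huv]
    · apply Adj.reachable
      apply aux_induce_adj
      rw [KK_adj]
      right
      have h1 : u.1.1 = i := (hA u.1).1 u.2
      have h2 : v.1.1 = i := (hA v.1).1 v.2
      refine ⟨?_, h1.trans h2.symm⟩
      intro hsnd
      exact huv (Subtype.ext (Prod.ext (h1.trans h2.symm) hsnd))
  have hpre0 : ((KK 2 n).induce (S₀ : Set V)).Preconnected := rowpre _ 0 hmemS₀
  have hmemC : ∀ p : V, p ∈ ((S₀ : Set V))ᶜ ↔ p.1 = 1 := by
    intro p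
    rw [Set.mem_compl_iff, hmemS₀]
    have h2 : ∀ i : Fin 2, ¬ i = 0 ↔ i = 1 := by decide
    exact h2 p.1
  have hpre1 : ((KK 2 n).induce ((S₀ : Set V)ᶜ)).Preconnected := rowpre _ 1 hmemC
  have hcardcompl : ∀ S : Finset V, ((S : Set V)ᶜ).ncard = 2 * n - S.card := by
    intro S
    have := Set.ncard_add_ncard_compl (S : Set V)
    rw [Set.ncard_coe_finset, card_V] at this
    omega
  have hsafe0 : IsConnectedSafeSet (KK 2 n) S₀ := by
    refine ⟨?_, ?_⟩
    · intro C D _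
      rw [aux_supp_card hpre0 C, aux_supp_card hpre1 D, Set.ncard_coe_finset, hcardS₀,
        hcardcompl, hcardS₀]
      omega
    · have : Nonempty ((S₀ : Set V) : Set V) :=
        ⟨⟨(0, ⟨0, hn⟩), (hmemS₀ _).2 rfl⟩⟩
      exact ⟨hpre0⟩
  have hmem : n ∈ {k | ∃ S : Finset V, IsConnectedSafeSet (KK 2 n) S ∧ S.card = k} :=
    ⟨S₀, hsafe0, hcardS₀⟩
  -- lower bound
  have hlow : ∀ k ∈ {k | ∃ S : Finset V, IsConnectedSafeSet (KK 2 n) S ∧ S.card = k}, n ≤ k := by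
    rintro k ⟨S, ⟨hsafe, hconn⟩, rfl⟩
    by_contra hlt
    push_neg at hlt
    obtain ⟨s₀⟩ := hconn.nonempty
    -- a fully free column exists
    have hcol : ∃ j : Fin n, ∀ i : Fin 2, (i, j) ∈ ((S : Set V))ᶜ := by
      by_contra hc
      push_neg at hc
      have hc' : ∀ j : Fin n, ∃ i : Fin 2, (i, j) ∈ S := by
        intro j
        obtain ⟨i, hi⟩ := hc j
        exact ⟨i, by simpa using hi⟩
      choose f hf using hc'
      have hinj : Function.Injective (fun j : Fin n => (⟨(f j, j), hf j⟩ : {x // x ∈ S})) := by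
        intro a b hab
        exact congrArg (fun x => x.1.2) hab
      have := Fintype.card_le_of_injective _ hinj
      rw [Fintype.card_fin, Fintype.card_coe] at this
      omega
    obtain ⟨j0, hj0⟩ := hcol
    set T : Set V := ((S : Set V))ᶜ with hT
    -- T is preconnected
    have hpreT : ((KK 2 n).induce T).Preconnected := by
      have key : ∀ w : T, ((KK 2 n).induce T).Reachable w ⟨(w.1.1, j0), hj0 _⟩ := by
        intro w
        by_cases hw : w.1.2 = j0
        · have he : (⟨(w.1.1, j0), hj0 _⟩ : T) = w :=
            Subtype.ext (Prod.ext rfl hw.symm)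
          rw [he]
        · exact Adj.reachable (aux_induce_adj (KK_adj.mpr (Or.inr ⟨hw, rfl⟩)))
      intro u v
      refine (key u).trans (Reachable.trans ?_ (key v).symm)
      by_cases hi : u.1.1 = v.1.1
      · have he : (⟨(u.1.1, j0), hj0 _⟩ : T) = ⟨(v.1.1, j0), hj0 _⟩ :=
          Subtype.ext (Prod.ext hi rfl)
        rw [he]
      · exact Adj.reachable (aux_induce_adj (KK_adj.mpr (Or.inl ⟨hi, rfl⟩)))
    -- apply safeness
    have hs0ne : s₀.1.2 ≠ j0 := by
      intro h
      have : s₀.1 ∈ T := by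
        have := hj0 s₀.1.1
        rwa [← h, Prod.mk.eta] at this
      exact this s₀.2
    set t : T := ⟨(s₀.1.1, j0), hj0 _⟩ with ht
    have hadj : (KK 2 n).Adj s₀.1 t.1 := KK_adj.mpr (Or.inr ⟨hs0ne, rfl⟩)
    have := hsafe (connectedComponentMk _ s₀) (connectedComponentMk _ t)
      ⟨s₀, by simp [ConnectedComponent.mem_supp_iff], t,
        by simp [ConnectedComponent.mem_supp_iff], hadj⟩
    rw [aux_supp_card hconn.preconnected, aux_supp_card hpreT, Set.ncard_coe_finset,
      hcardcompl] at this
    omega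
  exact le_antisymm (Nat.sInf_le hmem) (le_csInf ⟨n, hmem⟩ hlow)
end

section
/- For integers n ≥ m ≥ 3 with (m,n) ≠ (3,3), the graph K_m □ K_n has a connected safe set of size ⌈(mn−1)/2⌉ that is also a vertex cut. -/
open SimpleGraph

/-!
In the rook graph `K_α □ K_β`, pick a vertex `v = (a, b)`. Its neighbourhood is the rest of its
row and column; together with one vertex `(a', b')` off both, which links row and column, it has
`|α| + |β| - 1` vertices, and any superset `S` of it avoiding `v` induces a connected graph. Then
`v` is isolated in `G - S`, so the components of `G - S` are `{v}` and components of size at most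
`|V| - |S| - 1`; both are at most `|S|` once `|V| ≤ 2|S| + 1`, and a second vertex outside `S`
makes `S` a cut. For `K_m □ K_n` take `|S| = ⌊mn/2⌋ = ⌈(mn - 1)/2⌉`; then `m + n - 1 ≤ ⌊mn/2⌋`
amounts to `(m - 2)(n - 2) ≥ 2`, which fails only for `m = n = 3`.
-/

open Finset

namespace SimpleGraph

variable {V : Type*} {G : SimpleGraph V}

lemma eq_of_reachable_induce_compl {S : Set V} {v : V} (hv : v ∉ S) (hN : G.neighborSet v ⊆ S)
    {x : ↥Sᶜ} (h : (G.induce Sᶜ).Reachable ⟨v, hv⟩ x) : x = ⟨v, hv⟩ := by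
  obtain ⟨w⟩ := h
  cases w with
  | nil => rfl
  | @cons _ y _ hadj _ => exact absurd (hN hadj) y.2

lemma isSafeSet_of_connected_of_neighborSet_subset [Fintype V] {S : Finset V} {v : V}
    (hS : (G.induce (S : Set V)).Connected) (hv : v ∉ S) (hN : G.neighborSet v ⊆ S)
    (hcard : Fintype.card V ≤ 2 * #S + 1) : IsSafeSet G S := by
  intro C D _
  have hC : C.supp = Set.univ := by
    have := hS.preconnected.subsingleton_connectedComponent
    exact Set.eq_univ_of_forall fun x => Subsingleton.elim _ _
  have hS₀ : 0 < #S := card_pos.2 ⟨_, hS.nonempty.some.2⟩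
  have hSc : Nat.card ↥(S : Set V)ᶜ = Fintype.card V - #S := by
    rw [Nat.card_coe_set_eq, Set.ncard_compl, Set.ncard_coe_finset, Nat.card_eq_fintype_card]
  have hSn : Nat.card ↥(S : Set V) = #S := by rw [Nat.card_coe_set_eq, Set.ncard_coe_finset]
  rw [hC, Nat.card_univ, hSn]
  by_cases hvD : ⟨v, hv⟩ ∈ D.supp
  · have hD : D.supp = {⟨v, hv⟩} := by
      refine Set.eq_singleton_iff_unique_mem.2 ⟨hvD, fun x hx => ?_⟩
      rw [ConnectedComponent.mem_supp_iff] at hvD hx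
      exact eq_of_reachable_induce_compl hv hN (ConnectedComponent.exact (hvD.trans hx.symm))
    rw [hD, Nat.card_unique]
    omega
  · have hD : D.supp ⊂ Set.univ :=
      Set.ssubset_univ_iff.2 fun h => hvD (h ▸ trivial : _ ∈ D.supp)
    have hlt := Set.ncard_lt_ncard hD
    rw [Set.ncard_univ] at hlt
    rw [Nat.card_coe_set_eq]
    omega

lemma isVertexCut_of_neighborSet_subset [Fintype V] {S : Finset V} {v : V} (hv : v ∉ S)
    (hN : G.neighborSet v ⊆ S) (hcard : #S + 2 ≤ Fintype.card V) : IsVertexCut G S := by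
  classical
  obtain ⟨w, -, hw⟩ : ∃ w ∈ univ, w ∉ insert v S :=
    exists_mem_notMem_of_card_lt_card ((card_insert_le v S).trans_lt (by rw [card_univ]; omega))
  rw [mem_insert, not_or] at hw
  intro hpre
  have hwv := eq_of_reachable_induce_compl hv hN (hpre ⟨v, hv⟩ ⟨w, hw.2⟩)
  exact hw.1 (congrArg Subtype.val hwv)

section BoxProdTop

variable {α β : Type*}

lemma reachable_induce_boxProd_top {S : Set (α × β)} {p q : S}
    (h : p.1.1 = q.1.1 ∨ p.1.2 = q.1.2) :
    (((⊤ : SimpleGraph α) □ (⊤ : SimpleGraph β)).induce S).Reachable p q := by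
  obtain rfl | hpq := eq_or_ne p q
  · rfl
  · have hne : p.1 ≠ q.1 := Subtype.coe_injective.ne hpq
    rw [Ne, Prod.ext_iff] at hne
    refine Adj.reachable ?_
    rw [induce_adj, boxProd_adj, top_adj, top_adj]
    tauto

lemma connected_induce_boxProd_top {S : Set (α × β)} {a a' : α} {b b' : β}
    (hN : ((⊤ : SimpleGraph α) □ (⊤ : SimpleGraph β)).neighborSet (a, b) ⊆ S)
    (ha : a' ≠ a) (hb : b' ≠ b) (hS : (a', b') ∈ S) :
    (((⊤ : SimpleGraph α) □ (⊤ : SimpleGraph β)).induce S).Connected := by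
  have mem : ∀ x y, x = a ∨ y = b → (x, y) ≠ (a, b) → (x, y) ∈ S := fun x y h hne => by
    refine hN ?_
    rw [mem_neighborSet, boxProd_adj, top_adj, top_adj]
    rw [Ne, Prod.ext_iff] at hne
    tauto
  set G := ((⊤ : SimpleGraph α) □ (⊤ : SimpleGraph β)).induce S
  have step : ∀ p q : S, p.1.1 = q.1.1 ∨ p.1.2 = q.1.2 → G.Reachable p q :=
    fun _ _ => reachable_induce_boxProd_top
  let hub : S := ⟨(a, b'), mem _ _ (.inl rfl) (by simp [hb])⟩
  have reach : ∀ p : S, G.Reachable p hub := by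
    rintro ⟨⟨x, y⟩, hp⟩
    by_cases hx : x = a
    · exact step _ hub (.inl hx)
    by_cases hy : y = b
    · subst hy
      let r : S := ⟨(a', y), mem _ _ (.inr rfl) (by simp [ha])⟩
      let r' : S := ⟨(a', b'), hS⟩
      exact (step ⟨(x, y), hp⟩ r (.inr rfl)).trans
        ((step r r' (.inl rfl)).trans (step r' hub (.inr rfl)))
    · let c : S := ⟨(a, y), mem _ _ (.inl rfl) (by simp [hy])⟩
      exact (step ⟨(x, y), hp⟩ c (.inr rfl)).trans (step c hub (.inl rfl))
  exact (connected_iff _).2 ⟨fun p q => (reach p).trans (reach q).symm, ⟨hub⟩⟩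

open Fintype in
theorem exists_isConnectedSafeSet_isVertexCut_boxProd_top [Fintype α] [Fintype β]
    [DecidableEq α] [DecidableEq β] {k : ℕ} (hk₁ : card α + card β ≤ k + 1)
    (hk₂ : k + 2 ≤ card α * card β) (hk₃ : card α * card β ≤ 2 * k + 1) :
    ∃ S : Finset (α × β),
      IsConnectedSafeSet ((⊤ : SimpleGraph α) □ (⊤ : SimpleGraph β)) S ∧
      IsVertexCut ((⊤ : SimpleGraph α) □ (⊤ : SimpleGraph β)) S ∧ #S = k := by
  have hα : 1 < card α := by
    by_contra! h
    have := Nat.mul_le_mul_right (card β) h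
    omega
  have hβ : 1 < card β := by
    by_contra! h
    have := Nat.mul_le_mul_left (card α) h
    omega
  obtain ⟨a⟩ : Nonempty α := card_pos_iff.1 (by omega)
  obtain ⟨b⟩ : Nonempty β := card_pos_iff.1 (by omega)
  obtain ⟨a', ha⟩ := exists_ne_of_one_lt_card hα a
  obtain ⟨b', hb⟩ := exists_ne_of_one_lt_card hβ b
  set G := (⊤ : SimpleGraph α) □ (⊤ : SimpleGraph β)
  have hdeg : #(G.neighborFinset (a, b)) = (card α - 1) + (card β - 1) := by
    rw [card_neighborFinset_eq_degree, degree_boxProd]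
    simp
  have hAB : insert (a', b') (G.neighborFinset (a, b)) ⊆ univ.erase (a, b) := by
    refine insert_subset (by simp [ha]) fun q hq => mem_erase.2 ⟨?_, mem_univ q⟩
    exact (G.ne_of_adj ((mem_neighborFinset _ _ _).1 hq)).symm
  have hAk : #(insert (a', b') (G.neighborFinset (a, b))) ≤ k := by
    have := card_insert_le (a', b') (G.neighborFinset (a, b))
    omega
  have hkB : k ≤ #(univ.erase (a, b)) := by
    rw [card_erase_of_mem (mem_univ _), card_univ, Fintype.card_prod]
    omega
  obtain ⟨S, hAS, hSB, rfl⟩ := exists_subsuperset_card_eq hAB hAk hkB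
  have hN : G.neighborSet (a, b) ⊆ S := fun q hq =>
    hAS (mem_insert_of_mem ((mem_neighborFinset _ _ _).2 hq))
  have hv : (a, b) ∉ S := fun h => by simpa using hSB h
  have hS : (G.induce (S : Set (α × β))).Connected :=
    connected_induce_boxProd_top hN ha hb (hAS (mem_insert_self _ _))
  refine ⟨S, ⟨isSafeSet_of_connected_of_neighborSet_subset hS hv hN ?_, hS⟩,
    isVertexCut_of_neighborSet_subset hv hN ?_, rfl⟩ <;> rw [Fintype.card_prod] <;> omega

end BoxProdTop

end SimpleGraph

theorem exists_connected_safe_set_vertex_cut (m n : ℕ) (hm : 3 ≤ m) (hmn : m ≤ n)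
    (hne : ¬ (m = 3 ∧ n = 3)) :
    ∃ S : Finset (Fin m × Fin n), IsConnectedSafeSet (KK m n) S ∧
      IsVertexCut (KK m n) S ∧ S.card = (m * n - 1 + 1) / 2 := by
  have hn : 4 ≤ n := by omega
  have h₁ : 2 * m + 2 * n ≤ m * n + 2 := by nlinarith
  have h₂ : 9 ≤ m * n := by nlinarith
  obtain ⟨S, hS, hcut, hcard⟩ := exists_isConnectedSafeSet_isVertexCut_boxProd_top
    (α := Fin m) (β := Fin n) (k := m * n / 2) (by simp only [Fintype.card_fin]; omega)
    (by simp only [Fintype.card_fin]; omega) (by simp only [Fintype.card_fin]; omega)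
  exact ⟨S, hS, hcut, by omega⟩
end

section
/- Let G = K_m □ K_n, let S be a vertex cut of G with components C_1,…,C_k of G−S, and let (Π_1,Π_2) be the component projection induced by S (Π_1(t) and Π_2(t) are the sets of first and second coordinates appearing in C_t). If Σ_{t=1}^k |Π_1(t)| < m or Σ_{t=1}^k |Π_2(t)| < n, then the induced subgraph G[S] is connected. -/
open SimpleGraph

lemma aux_sum_card {α ι : Type*} [Fintype α] [Finite ι] (f : ι → Set α)
    (hdisj : ∀ i j a, a ∈ f i → a ∈ f j → i = j)
    (hcov : ∀ a, ∃ i, a ∈ f i) :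
    Fintype.card α ≤ ∑ᶠ i, Nat.card (f i) := by
  classical
  cases nonempty_fintype ι
  rw [finsum_eq_sum_of_fintype]
  have h1 : (Finset.univ : Finset α) = Finset.univ.biUnion fun i => (f i).toFinset := by
    ext a
    simp only [Finset.mem_univ, Finset.mem_biUnion, Set.mem_toFinset, true_iff]
    obtain ⟨i, hi⟩ := hcov a
    exact ⟨i, trivial, hi⟩
  calc Fintype.card α = (Finset.univ.biUnion fun i => (f i).toFinset).card := by
        rw [← h1, Finset.card_univ]
    _ = ∑ i, ((f i).toFinset).card := Finset.card_biUnion (by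
        intro i _ j _ hij
        simp only [Finset.disjoint_left, Set.mem_toFinset]
        exact fun a ha hb => hij (hdisj i j a ha hb))
    _ = ∑ i, Nat.card (f i) := by
        refine Finset.sum_congr rfl fun i _ => ?_
        rw [Nat.card_coe_set_eq, Set.ncard_eq_toFinset_card']
    _ ≤ ∑ i, Nat.card (f i) := le_rfl

/-- If a full row (or, with `Sum`-swapped roles, a full column) is inside `S`,
then the induced graph on `S` is connected. -/
lemma row_connected (m n : ℕ) (S : Finset (Fin m × Fin n)) (i : Fin m)
    (hrow : ∀ b : Fin n, (i, b) ∈ S) (b0 : Fin n) :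
    ((KK m n).induce (S : Set (Fin m × Fin n))).Connected := by
  have hmem : ∀ b : Fin n, ((i, b) : Fin m × Fin n) ∈ (S : Set (Fin m × Fin n)) :=
    fun b => hrow b
  have hne : Nonempty ((S : Set (Fin m × Fin n)) : Set _) := ⟨⟨(i, b0), hmem b0⟩⟩
  have key : ∀ w : ((S : Set (Fin m × Fin n)) : Set _),
      ((KK m n).induce (S : Set (Fin m × Fin n))).Reachable w ⟨(i, w.1.2), hmem _⟩ := by
    intro w
    by_cases hw : w.1.1 = i
    · have : w = ⟨(i, w.1.2), hmem _⟩ := Subtype.ext (Prod.ext hw rfl)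
      rw [this]
    · refine Adj.reachable ?_
      show (KK m n).Adj w.1 (i, w.1.2)
      exact Or.inl ⟨hw, rfl⟩
  constructor
  intro u v
  refine (key u).trans (Reachable.trans ?_ (key v).symm)
  by_cases hb : u.1.2 = v.1.2
  · rw [hb]
  · refine Adj.reachable ?_
    show (KK m n).Adj (i, u.1.2) (i, v.1.2)
    exact Or.inr ⟨hb, rfl⟩

theorem induced_cut_connected_of_projection_sum_lt (m n : ℕ)
    (S : Finset (Fin m × Fin n)) (hcut : IsVertexCut (KK m n) S)
    (h : (∑ᶠ C : ((KK m n).induce ((S : Set (Fin m × Fin n))ᶜ)).ConnectedComponent,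
            Nat.card {i : Fin m | ∃ w ∈ C.supp, (w : Fin m × Fin n).1 = i}) < m ∨
         (∑ᶠ C : ((KK m n).induce ((S : Set (Fin m × Fin n))ᶜ)).ConnectedComponent,
            Nat.card {j : Fin n | ∃ w ∈ C.supp, (w : Fin m × Fin n).2 = j}) < n) :
    ((KK m n).induce (S : Set (Fin m × Fin n))).Connected := by
  classical
  -- some vertex exists, since otherwise the complement graph is trivially preconnected
  have hne : Nonempty (Fin m × Fin n) := by
    by_contra hempty
    refine hcut fun u v => (hempty ⟨u.1⟩).elim
  obtain ⟨⟨a0, b0⟩⟩ := hne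
  set H := (KK m n).induce ((S : Set (Fin m × Fin n))ᶜ) with hH
  rcases h with h | h
  · -- row case: find a full row inside S
    have hfull : ∃ i : Fin m, ∀ b : Fin n, (i, b) ∈ S := by
      by_contra hcon
      push_neg at hcon
      have := aux_sum_card
        (f := fun C : H.ConnectedComponent =>
          {i : Fin m | ∃ w ∈ C.supp, (w : Fin m × Fin n).1 = i})
        (by
          rintro C D a ⟨w, hwC, hw⟩ ⟨w', hwD, hw'⟩
          rw [ConnectedComponent.mem_supp_iff] at hwC hwD
          by_cases hww : w = w'
          · rw [← hwC, ← hwD, hww]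
          · have hadj : H.Adj w w' := by
              show (KK m n).Adj w.1 w'.1
              refine Or.inr ⟨?_, hw.trans hw'.symm⟩
              intro h2
              exact hww (Subtype.ext (Prod.ext (hw.trans hw'.symm) h2))
            rw [← hwC, ← hwD]
            exact ConnectedComponent.sound hadj.reachable)
        (by
          intro a
          obtain ⟨b, hb⟩ := hcon a
          have hb' : ((a, b) : Fin m × Fin n) ∈ ((S : Set (Fin m × Fin n))ᶜ) := hb
          exact ⟨H.connectedComponentMk ⟨(a, b), hb'⟩,
            ⟨(a, b), hb'⟩, ConnectedComponent.mem_supp_iff _ _ |>.mpr rfl, rfl⟩)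
      simp only [Fintype.card_fin] at this
      omega
    obtain ⟨i, hi⟩ := hfull
    exact row_connected m n S i hi b0
  · -- column case
    have hfull : ∃ j : Fin n, ∀ a : Fin m, (a, j) ∈ S := by
      by_contra hcon
      push_neg at hcon
      have := aux_sum_card
        (f := fun C : H.ConnectedComponent =>
          {j : Fin n | ∃ w ∈ C.supp, (w : Fin m × Fin n).2 = j})
        (by
          rintro C D a ⟨w, hwC, hw⟩ ⟨w', hwD, hw'⟩
          rw [ConnectedComponent.mem_supp_iff] at hwC hwD
          by_cases hww : w = w'
          · rw [← hwC, ← hwD, hww]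
          · have hadj : H.Adj w w' := by
              show (KK m n).Adj w.1 w'.1
              refine Or.inl ⟨?_, hw.trans hw'.symm⟩
              intro h2
              exact hww (Subtype.ext (Prod.ext h2 (hw.trans hw'.symm)))
            rw [← hwC, ← hwD]
            exact ConnectedComponent.sound hadj.reachable)
        (by
          intro a
          obtain ⟨b, hb⟩ := hcon a
          have hb' : ((b, a) : Fin m × Fin n) ∈ ((S : Set (Fin m × Fin n))ᶜ) := hb
          exact ⟨H.connectedComponentMk ⟨(b, a), hb'⟩,
            ⟨(b, a), hb'⟩, ConnectedComponent.mem_supp_iff _ _ |>.mpr rfl, rfl⟩)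
      simp only [Fintype.card_fin] at this
      omega
    obtain ⟨j, hj⟩ := hfull
    -- column version of row_connected
    have hmem : ∀ a : Fin m, ((a, j) : Fin m × Fin n) ∈ (S : Set (Fin m × Fin n)) :=
      fun a => hj a
    have hne : Nonempty ((S : Set (Fin m × Fin n)) : Set _) := ⟨⟨(a0, j), hmem a0⟩⟩
    have key : ∀ w : ((S : Set (Fin m × Fin n)) : Set _),
        ((KK m n).induce (S : Set (Fin m × Fin n))).Reachable w ⟨(w.1.1, j), hmem _⟩ := by
      intro w
      by_cases hw : w.1.2 = j
      · have : w = ⟨(w.1.1, j), hmem _⟩ := Subtype.ext (Prod.ext rfl hw)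
        rw [this]
      · refine Adj.reachable ?_
        show (KK m n).Adj w.1 (w.1.1, j)
        exact Or.inr ⟨hw, rfl⟩
    constructor
    intro u v
    refine (key u).trans (Reachable.trans ?_ (key v).symm)
    by_cases hb : u.1.1 = v.1.1
    · rw [hb]
    · refine Adj.reachable ?_
      show (KK m n).Adj (u.1.1, j) (v.1.1, j)
      exact Or.inl ⟨hb, rfl⟩
end

section
/- Let G = K_m □ K_n and let S be a vertex cut of G such that G−S has at least 3 connected components. Then the induced subgraph G[S] is connected. -/
open SimpleGraph

lemma rowReach {m n : ℕ} (T : Set (Fin m × Fin n)) {i : Fin m} {j j' : Fin n}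
    (h : (i,j) ∈ T) (h' : (i,j') ∈ T) :
    ((KK m n).induce T).Reachable ⟨(i,j),h⟩ ⟨(i,j'),h'⟩ := by
  rcases eq_or_ne j j' with rfl | hne
  · exact Reachable.refl _
  · exact SimpleGraph.Adj.reachable (by simp [KK, hne])

lemma colReach {m n : ℕ} (T : Set (Fin m × Fin n)) {j : Fin n} {i i' : Fin m}
    (h : (i,j) ∈ T) (h' : (i',j) ∈ T) :
    ((KK m n).induce T).Reachable ⟨(i,j),h⟩ ⟨(i',j),h'⟩ := by
  rcases eq_or_ne i i' with rfl | hne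
  · exact Reachable.refl _
  · exact SimpleGraph.Adj.reachable (by simp [KK, hne])

theorem induced_cut_connected_of_three_components (m n : ℕ)
    (S : Finset (Fin m × Fin n)) (hcut : IsVertexCut (KK m n) S)
    (h3 : 3 ≤ Nat.card ((KK m n).induce ((S : Set (Fin m × Fin n))ᶜ)).ConnectedComponent) :
    ((KK m n).induce (S : Set (Fin m × Fin n))).Connected := by
  classical
  set T : Set (Fin m × Fin n) := (S : Set (Fin m × Fin n))ᶜ with hT
  have hne : Nonempty ((KK m n).induce T).ConnectedComponent := by
    have : 0 < Nat.card ((KK m n).induce T).ConnectedComponent := by omega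
    exact (Nat.card_pos_iff.mp this).1
  have key : ∀ i i' : Fin m, ∃ c : Fin n,
      (i, c) ∈ (S : Set (Fin m × Fin n)) ∧ (i', c) ∈ (S : Set (Fin m × Fin n)) := by
    intro i i'
    set P : ((KK m n).induce T).ConnectedComponent → Prop := fun C =>
      ∃ b, ∃ h : (i, b) ∈ T,
        ((KK m n).induce T).connectedComponentMk ⟨(i,b), h⟩ = C with hP
    set Q : ((KK m n).induce T).ConnectedComponent → Prop := fun C =>
      ∃ b, ∃ h : (i', b) ∈ T,
        ((KK m n).induce T).connectedComponentMk ⟨(i',b), h⟩ = C with hQ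
    have uniqP : ∀ C C', P C → P C' → C = C' := by
      rintro C C' ⟨b, h, rfl⟩ ⟨b', h', rfl⟩
      exact ConnectedComponent.sound (rowReach T h h')
    have uniqQ : ∀ C C', Q C → Q C' → C = C' := by
      rintro C C' ⟨b, h, rfl⟩ ⟨b', h', rfl⟩
      exact ConnectedComponent.sound (rowReach T h h')
    have hthird : ∃ C, ¬ P C ∧ ¬ Q C := by
      by_contra hcon
      have hall : ∀ C, P C ∨ Q C := by
        intro C
        by_contra h
        push_neg at h
        exact hcon ⟨C, h.1, h.2⟩
      obtain ⟨C0⟩ := hne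
      have hsurj : Function.Surjective (fun x : Bool =>
          if x then (if h : ∃ C, P C then h.choose else C0)
          else (if h : ∃ C, Q C then h.choose else C0)) := by
        intro C
        rcases hall C with hPC | hQC
        · refine ⟨true, ?_⟩
          have hex : ∃ C, P C := ⟨C, hPC⟩
          simp only [if_true, dif_pos hex]
          exact uniqP _ _ hex.choose_spec hPC
        · refine ⟨false, ?_⟩
          have hex : ∃ C, Q C := ⟨C, hQC⟩
          simp only [Bool.false_eq_true, if_false, dif_pos hex]
          exact uniqQ _ _ hex.choose_spec hQC
      have h2 : Nat.card ((KK m n).induce T).ConnectedComponent ≤ Nat.card Bool :=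
        Nat.card_le_card_of_surjective _ hsurj
      have hb : Nat.card Bool = 2 := by simp [Nat.card_eq_fintype_card]
      omega
    obtain ⟨C, hPC, hQC⟩ := hthird
    obtain ⟨⟨⟨r, c⟩, hrc⟩, hrep⟩ := C.exists_rep
    have h1 : (i, c) ∈ (S : Set (Fin m × Fin n)) := by
      by_contra h
      have hmem : (i, c) ∈ T := by simpa [hT] using h
      exact hPC ⟨c, hmem, hrep ▸ ConnectedComponent.sound (colReach T hmem hrc)⟩
    have h2 : (i', c) ∈ (S : Set (Fin m × Fin n)) := by
      by_contra h
      have hmem : (i', c) ∈ T := by simpa [hT] using h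
      exact hQC ⟨c, hmem, hrep ▸ ConnectedComponent.sound (colReach T hmem hrc)⟩
    exact ⟨c, h1, h2⟩
  have hSne : Nonempty ↥(S : Set (Fin m × Fin n)) := by
    obtain ⟨C0⟩ := hne
    obtain ⟨⟨⟨r0, c0⟩, h0⟩, -⟩ := C0.exists_rep
    obtain ⟨c, h1, -⟩ := key r0 r0
    exact ⟨⟨(r0, c), h1⟩⟩
  refine ⟨?_⟩
  rintro ⟨⟨i, j⟩, hu⟩ ⟨⟨i', j'⟩, hv⟩
  obtain ⟨c, h1, h2⟩ := key i i'
  exact (rowReach _ hu h1).trans ((colReach _ h1 h2).trans (rowReach _ h2 hv))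
end

section
/- For integers m, n ≥ 3, the connected safe number of K_m □ K_n equals α(m,n) := min over all positive integers m_1+m_2=m, n_1+n_2=n of [ mn − m_1n_1 − m_2n_2 + max{ ⌈(max{m_1n_1, m_2n_2} − mn + m_1n_1 + m_2n_2)/2⌉, 1 } ]. -/
open SimpleGraph

/-- The quantity `α(m,n)` from the paper. -/
noncomputable def alpha (m n : ℕ) : ℕ :=
  sInf {k : ℕ | ∃ m₁ m₂ n₁ n₂ : ℕ, 0 < m₁ ∧ 0 < m₂ ∧ 0 < n₁ ∧ 0 < n₂ ∧
    m₁ + m₂ = m ∧ n₁ + n₂ = n ∧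
    (k : ℤ) = (m : ℤ) * n - (m₁ : ℤ) * n₁ - (m₂ : ℤ) * n₂ +
      max ⌈((max ((m₁ : ℤ) * n₁) ((m₂ : ℤ) * n₂) - (m : ℤ) * n + (m₁ : ℤ) * n₁ +
            (m₂ : ℤ) * n₂ : ℤ) : ℚ) / 2⌉ 1}

/-!
Two vertices of `K_m □ K_n` are adjacent exactly when they share a row or a column, so the
components of `G - S` occupy pairwise disjoint sets of rows and of columns. Let `D` be a component
maximising `|rows D| * |cols D|`, with `m₁` rows `R` and `n₁` columns `C`. The two off-diagonal
rectangles `R × Cᶜ` and `Rᶜ × C` lie in `S`; they are not joined to each other, so a connected `S`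
contains at least one more vertex; and by maximality the other components fit into
`m₁ n₂ + m₂ n₁` cells. Together with `|D| ≤ |S|` this gives `|S| ≥ α(m, n)`. (When `G - S` is
connected, `|S| ≥ mn / 2` and the partition `(1, m - 1, 1, n - 1)` suffices.)

Conversely, for an optimal partition with `m₁ n₁ ≤ m₂ n₂`, the two off-diagonal rectangles
together with `max (⌈(m₂ n₂ - m₁ n₂ - m₂ n₁) / 2⌉, 1)` cells of the block `Rᶜ × Cᶜ` form a
connected safe set of size `α(m, n)`: every component of its complement lies in `R × C` or in
what is left of `Rᶜ × Cᶜ`.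
-/

namespace SimpleGraph

variable {V W : Type*} {G : SimpleGraph V} {A : Set V}

theorem Reachable.iff_of_adj {H : SimpleGraph W} {p : W → Prop}
    (hp : ∀ x y, H.Adj x y → (p x ↔ p y)) {x y : W} (h : H.Reachable x y) : p x ↔ p y := by
  obtain ⟨w⟩ := h
  induction w with
  | nil => rfl
  | cons hadj _ ih => exact (hp _ _ hadj).trans ih

namespace ConnectedComponent

def verts (c : (G.induce A).ConnectedComponent) : Set V := Subtype.val '' c.supp

theorem mem_verts {c : (G.induce A).ConnectedComponent} {z : V} :
    z ∈ c.verts ↔ ∃ hz : z ∈ A, (G.induce A).connectedComponentMk ⟨z, hz⟩ = c := by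
  simp [verts, mem_supp_iff]

theorem mem_verts_connectedComponentMk (z : A) :
    z.1 ∈ ((G.induce A).connectedComponentMk z).verts :=
  mem_verts.2 ⟨z.2, rfl⟩

theorem verts_subset (c : (G.induce A).ConnectedComponent) : c.verts ⊆ A := by
  rintro _ ⟨z, -, rfl⟩
  exact z.2

theorem verts_nonempty (c : (G.induce A).ConnectedComponent) : c.verts.Nonempty := by
  obtain ⟨z, rfl⟩ := c.exists_rep
  exact ⟨z, mem_verts_connectedComponentMk z⟩

theorem ncard_verts (c : (G.induce A).ConnectedComponent) : c.verts.ncard = Nat.card c.supp := by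
  rw [verts, Set.ncard_image_of_injective _ Subtype.val_injective, Nat.card_coe_set_eq]

theorem verts_eq_of_preconnected (h : (G.induce A).Preconnected)
    (c : (G.induce A).ConnectedComponent) : c.verts = A := by
  refine (verts_subset c).antisymm fun z hz => mem_verts.2 ⟨hz, ?_⟩
  obtain ⟨v, rfl⟩ := c.exists_rep
  exact ConnectedComponent.sound (h _ _)

theorem verts_subset_or_subset_compl {P : Set V}
    (hP : ∀ x ∈ A, ∀ y ∈ A, G.Adj x y → (x ∈ P ↔ y ∈ P))
    (c : (G.induce A).ConnectedComponent) : c.verts ⊆ P ∨ c.verts ⊆ Pᶜ := by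
  obtain ⟨v, rfl⟩ := c.exists_rep
  have hsame : ∀ z ∈ ((G.induce A).connectedComponentMk v).verts, (z ∈ P ↔ v.1 ∈ P) := by
    intro z hz
    obtain ⟨_, hzc⟩ := mem_verts.1 hz
    exact (ConnectedComponent.exact hzc).iff_of_adj (p := fun w : A => w.1 ∈ P)
      fun x y hxy => hP x x.2 y y.2 hxy
  by_cases hv : v.1 ∈ P
  · exact .inl fun z hz => (hsame z hz).2 hv
  · exact .inr fun z hz => mt (hsame z hz).1 hv

end ConnectedComponent

open ConnectedComponent in
theorem Connected.exists_adj_verts (hG : G.Connected) {S : Set V} (hS : S.Nonempty)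
    (D : (G.induce Sᶜ).ConnectedComponent) : ∃ u ∈ S, ∃ v ∈ D.verts, G.Adj u v := by
  obtain ⟨v, hv⟩ := D.verts_nonempty
  obtain ⟨s, hs⟩ := hS
  obtain ⟨p⟩ := hG.preconnected v s
  obtain ⟨d, -, hd, hd'⟩ := p.exists_boundary_dart D.verts hv fun h => D.verts_subset h hs
  refine ⟨d.snd, not_not.1 fun hsnd => hd' ?_, d.fst, hd, d.adj.symm⟩
  obtain ⟨hfst, rfl⟩ := mem_verts.1 hd
  exact mem_verts.2 ⟨hsnd, ConnectedComponent.sound (Adj.reachable (G := G.induce Sᶜ) d.adj.symm)⟩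

end SimpleGraph

open SimpleGraph.ConnectedComponent

section SafeSet

variable {V : Type*} {G : SimpleGraph V} {S : Finset V}

theorem isConnectedSafeSet_iff :
    IsConnectedSafeSet G S ↔ (G.induce (S : Set V)).Connected ∧
      ∀ D : (G.induce ((S : Set V)ᶜ)).ConnectedComponent,
        (∃ u ∈ (S : Set V), ∃ v ∈ D.verts, G.Adj u v) → D.verts.ncard ≤ S.card := by
  refine and_comm.trans (and_congr_right fun hS => ?_)
  have hcard (C : (G.induce (S : Set V)).ConnectedComponent) : Nat.card C.supp = S.card := by
    rw [← ncard_verts, verts_eq_of_preconnected hS.preconnected, Set.ncard_coe_finset]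
  simp only [IsSafeSet, hcard, ← ncard_verts]
  constructor
  · rintro h D ⟨u, hu, v, hv, huv⟩
    obtain ⟨hv', rfl⟩ := mem_verts.1 hv
    exact h (G.induce (S : Set V) |>.connectedComponentMk ⟨u, hu⟩) _
      ⟨⟨u, hu⟩, rfl, ⟨v, hv'⟩, rfl, huv⟩
  · rintro h C D ⟨u, -, v, hv, huv⟩
    exact h D ⟨u, u.2, v, ⟨v, hv, rfl⟩, huv⟩

theorem IsConnectedSafeSet.ncard_verts_le (hG : G.Connected) (hS : IsConnectedSafeSet G S)
    (D : (G.induce ((S : Set V)ᶜ)).ConnectedComponent) : D.verts.ncard ≤ S.card := by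
  obtain ⟨u⟩ := hS.2.nonempty
  exact (isConnectedSafeSet_iff.1 hS).2 D (hG.exists_adj_verts ⟨u, u.2⟩ D)

theorem IsConnectedSafeSet.card_le_two_mul [Finite V] (hG : G.Connected)
    (hS : IsConnectedSafeSet G S) (hT : (G.induce ((S : Set V)ᶜ)).Preconnected) :
    Nat.card V ≤ 2 * S.card := by
  have hsplit := Set.ncard_add_ncard_compl (S : Set V)
  rw [Set.ncard_coe_finset] at hsplit
  rcases ((S : Set V)ᶜ).eq_empty_or_nonempty with hT' | ⟨v, hv⟩
  · rw [hT', Set.ncard_empty] at hsplit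
    omega
  · have hle := hS.ncard_verts_le hG (G.induce _ |>.connectedComponentMk ⟨v, hv⟩)
    rw [verts_eq_of_preconnected hT] at hle
    omega

theorem exists_isConnectedSafeSet_card_eq_connectedSafeNumber [Fintype V] (hG : G.Connected) :
    ∃ S : Finset V, IsConnectedSafeSet G S ∧ S.card = connectedSafeNumber G := by
  refine Nat.sInf_mem (s := {k | ∃ S : Finset V, IsConnectedSafeSet G S ∧ S.card = k})
    ⟨_, Finset.univ, isConnectedSafeSet_iff.2 ⟨?_, fun D _ => ?_⟩, rfl⟩
  · rw [Finset.coe_univ]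
    exact (induceUnivIso G).connected_iff.2 hG
  · obtain ⟨v, hv⟩ := D.verts_nonempty
    exact absurd (Finset.mem_coe.2 (Finset.mem_univ v)) (D.verts_subset hv)

end SafeSet

theorem sum_ncard_le_ncard_of_pairwiseDisjoint {ι α : Type*} [Finite α] (t : Finset ι)
    {s : ι → Set α} (h : (t : Set ι).PairwiseDisjoint s) {B : Set α} (hB : ∀ i ∈ t, s i ⊆ B) :
    ∑ i ∈ t, (s i).ncard ≤ B.ncard := by
  rw [← finsum_mem_coe_finset,
    ← Set.Finite.ncard_biUnion t.finite_toSet (fun _ _ => Set.toFinite _) h]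
  exact Set.ncard_le_ncard (Set.iUnion₂_subset hB)

theorem ncard_prod_compl_union_compl_prod {α β : Type*} [Finite α] [Finite β] (R : Set α)
    (C : Set β) : (R ×ˢ Cᶜ ∪ Rᶜ ×ˢ C).ncard = R.ncard * Cᶜ.ncard + Rᶜ.ncard * C.ncard := by
  rw [Set.ncard_union_eq (Set.disjoint_left.2 fun _ h h' => h'.1 h.1), Set.ncard_prod,
    Set.ncard_prod]

section Alpha

variable {m n m₁ m₂ n₁ n₂ : ℕ}

def alphaExpr (m n m₁ m₂ n₁ n₂ : ℕ) : ℤ :=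
  (m : ℤ) * n - (m₁ : ℤ) * n₁ - (m₂ : ℤ) * n₂ +
    max ⌈((max ((m₁ : ℤ) * n₁) ((m₂ : ℤ) * n₂) - (m : ℤ) * n + (m₁ : ℤ) * n₁ +
          (m₂ : ℤ) * n₂ : ℤ) : ℚ) / 2⌉ 1

def alphaSet (m n : ℕ) : Set ℕ :=
  {k | ∃ m₁ m₂ n₁ n₂ : ℕ, 0 < m₁ ∧ 0 < m₂ ∧ 0 < n₁ ∧ 0 < n₂ ∧ m₁ + m₂ = m ∧ n₁ + n₂ = n ∧
    (k : ℤ) = alphaExpr m n m₁ m₂ n₁ n₂}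

theorem alpha_eq_sInf (m n : ℕ) : alpha m n = sInf (alphaSet m n) := rfl

theorem add_max_ceil_half_le_iff {a b c : ℤ} :
    a + max ⌈((b - a : ℤ) : ℚ) / 2⌉ 1 ≤ c ↔ b + a ≤ 2 * c ∧ a + 1 ≤ c := by
  rw [← le_sub_iff_add_le', max_le_iff, Int.ceil_le, div_le_iff₀ two_pos]
  norm_cast
  omega

theorem alphaExpr_le_iff (hm : m₁ + m₂ = m) (hn : n₁ + n₂ = n) {c : ℤ} :
    alphaExpr m n m₁ m₂ n₁ n₂ ≤ c ↔
      max ((m₁ : ℤ) * n₁) ((m₂ : ℤ) * n₂) + (m₁ * n₂ + m₂ * n₁) ≤ 2 * c ∧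
        (m₁ * n₂ + m₂ * n₁ : ℤ) + 1 ≤ c := by
  subst hm hn
  rw [alphaExpr, ← add_max_ceil_half_le_iff]
  push_cast
  ring_nf

theorem alphaExpr_comm : alphaExpr m n m₁ m₂ n₁ n₂ = alphaExpr m n m₂ m₁ n₂ n₁ := by
  rw [alphaExpr, alphaExpr, max_comm ((m₁ : ℤ) * n₁)]
  ring_nf

theorem alphaExpr_pos (hm : m₁ + m₂ = m) (hn : n₁ + n₂ = n) :
    0 < alphaExpr m n m₁ m₂ n₁ n₂ := by
  by_contra! h
  have := ((alphaExpr_le_iff hm hn).1 h).2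
  have : (0 : ℤ) ≤ m₁ * n₂ + m₂ * n₁ := by positivity
  omega

theorem alpha_le_of_alphaExpr_le (h₁ : 0 < m₁) (h₂ : 0 < m₂) (h₃ : 0 < n₁) (h₄ : 0 < n₂)
    (hm : m₁ + m₂ = m) (hn : n₁ + n₂ = n) {c : ℕ} (h : alphaExpr m n m₁ m₂ n₁ n₂ ≤ c) :
    alpha m n ≤ c := by
  have hpos := (alphaExpr_pos hm hn).le
  rw [alpha_eq_sInf]
  have hmem : (alphaExpr m n m₁ m₂ n₁ n₂).toNat ∈ alphaSet m n :=
    ⟨m₁, m₂, n₁, n₂, h₁, h₂, h₃, h₄, hm, hn, Int.toNat_of_nonneg hpos⟩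
  exact (Nat.sInf_le hmem).trans (by omega)

theorem exists_alphaExpr_eq_alpha (hm : 2 ≤ m) (hn : 2 ≤ n) :
    ∃ m₁ m₂ n₁ n₂ : ℕ, 0 < m₁ ∧ 0 < m₂ ∧ 0 < n₁ ∧ 0 < n₂ ∧ m₁ + m₂ = m ∧ n₁ + n₂ = n ∧
      (alpha m n : ℤ) = alphaExpr m n m₁ m₂ n₁ n₂ := by
  rw [alpha_eq_sInf]
  exact Nat.sInf_mem (s := alphaSet m n) ⟨_, 1, m - 1, 1, n - 1, one_pos, by omega, one_pos,
    by omega, by omega, by omega, Int.toNat_of_nonneg (alphaExpr_pos (by omega) (by omega)).le⟩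

theorem mul_le_add_of_mul_le_mul {a b c d : ℕ} (h : a * b ≤ c * d) : a * b ≤ a * d + c * b := by
  rcases le_or_gt b d with hbd | hdb
  · exact (Nat.mul_le_mul_left a hbd).trans (Nat.le_add_right _ _)
  rcases le_or_gt a c with hac | hca
  · exact (Nat.mul_le_mul_right b hac).trans (Nat.le_add_left _ _)
  · exact absurd h (not_le.2 (Nat.mul_lt_mul'' hca hdb))

theorem alpha_le_of_mul_le_two_mul (hm : 3 ≤ m) (hn : 3 ≤ n) {s : ℕ} (h : m * n ≤ 2 * s) :
    alpha m n ≤ s := by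
  obtain ⟨m', rfl⟩ : ∃ m', m = 1 + m' := ⟨m - 1, by omega⟩
  obtain ⟨n', rfl⟩ : ∃ n', n = 1 + n' := ⟨n - 1, by omega⟩
  refine alpha_le_of_alphaExpr_le one_pos (by omega) one_pos (by omega) rfl rfl
    ((alphaExpr_le_iff rfl rfl).2 ⟨?_, ?_⟩)
  · rw [max_eq_right (by push_cast; nlinarith)]
    push_cast at h ⊢
    nlinarith
  · push_cast at h ⊢
    nlinarith

theorem alpha_le_of_counts {s d r : ℕ} (h₁ : 0 < m₁) (h₂ : 0 < m₂) (h₃ : 0 < n₁) (h₄ : 0 < n₂)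
    (hm : m₁ + m₂ = m) (hn : n₁ + n₂ = n) (htot : s + d + r = m * n) (hds : d ≤ s)
    (hd : d ≤ m₁ * n₁) (hr : r ≤ m₂ * n₂) (hr' : r ≤ m₁ * n₂ + m₂ * n₁)
    (hs : m₁ * n₂ + m₂ * n₁ < s) : alpha m n ≤ s := by
  subst hm hn
  refine alpha_le_of_alphaExpr_le h₁ h₂ h₃ h₄ rfl rfl
    ((alphaExpr_le_iff rfl rfl).2 ⟨?_, by omega⟩)
  rw [← max_add_add_right, max_le_iff]
  zify at htot hds hd hr hr' hs
  constructor <;> nlinarith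

end Alpha

namespace KK

variable {m n m₁ m₂ n₁ n₂ : ℕ} {A : Set (Fin m × Fin n)} {S : Finset (Fin m × Fin n)}

theorem adj_iff {u v : Fin m × Fin n} :
    (KK m n).Adj u v ↔ (u.1 ≠ v.1 ∧ u.2 = v.2) ∨ (u.2 ≠ v.2 ∧ u.1 = v.1) := by
  simp [KK, boxProd_adj]

theorem connected (hm : 0 < m) (hn : 0 < n) : (KK m n).Connected :=
  haveI : Nonempty (Fin m) := ⟨⟨0, hm⟩⟩
  haveI : Nonempty (Fin n) := ⟨⟨0, hn⟩⟩
  connected_top.boxProd connected_top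

theorem reachable_of_fst_eq_or_snd_eq {x y : A} (h : x.1.1 = y.1.1 ∨ x.1.2 = y.1.2) :
    ((KK m n).induce A).Reachable x y := by
  by_cases hxy : x = y
  · exact hxy ▸ Reachable.rfl
  have hne : x.1 ≠ y.1 := fun h => hxy (Subtype.ext h)
  refine Adj.reachable (adj_iff.2 ?_)
  rcases h with h | h
  · exact .inr ⟨fun h' => hne (Prod.ext h h'), h⟩
  · exact .inl ⟨fun h' => hne (Prod.ext h' h), h⟩

theorem reachable_of_corner_mem {x y : A} (h : (x.1.1, y.1.2) ∈ A) :
    ((KK m n).induce A).Reachable x y :=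
  (reachable_of_fst_eq_or_snd_eq (x := x) (y := ⟨_, h⟩) (.inl rfl)).trans
    (reachable_of_fst_eq_or_snd_eq (y := y) (.inr rfl))

theorem verts_subset_prod_or_subset_compl_prod {R : Set (Fin m)} {C : Set (Fin n)}
    (hA : ∀ z ∈ A, (z.1 ∈ R ↔ z.2 ∈ C)) (c : ((KK m n).induce A).ConnectedComponent) :
    c.verts ⊆ R ×ˢ C ∨ c.verts ⊆ Rᶜ ×ˢ Cᶜ := by
  have hP : ∀ x ∈ A, ∀ y ∈ A, (KK m n).Adj x y →
      (x ∈ Prod.fst ⁻¹' R ↔ y ∈ Prod.fst ⁻¹' R) := by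
    intro x hx y hy hxy
    rcases adj_iff.1 hxy with ⟨-, h⟩ | ⟨-, h⟩
    · rw [Set.mem_preimage, Set.mem_preimage, hA x hx, hA y hy, h]
    · rw [Set.mem_preimage, Set.mem_preimage, h]
  refine (c.verts_subset_or_subset_compl hP).imp (fun h z hz => ?_) (fun h z hz => ?_)
  · exact ⟨h hz, (hA z (c.verts_subset hz)).1 (h hz)⟩
  · exact ⟨h hz, mt (hA z (c.verts_subset hz)).2 (h hz)⟩

theorem not_connected_prod_compl_union_compl_prod {R : Set (Fin m)} {C : Set (Fin n)}
    (h₁ : (R ×ˢ Cᶜ).Nonempty) (h₂ : (Rᶜ ×ˢ C).Nonempty) :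
    ¬((KK m n).induce (R ×ˢ Cᶜ ∪ Rᶜ ×ˢ C)).Connected := by
  intro hconn
  obtain ⟨x, hx⟩ := h₁
  obtain ⟨y, hy⟩ := h₂
  have hA : ∀ z ∈ R ×ˢ Cᶜ ∪ Rᶜ ×ˢ C, (z.1 ∈ R ↔ z.2 ∈ Cᶜ) := by
    rintro z (⟨h, h'⟩ | ⟨h, h'⟩)
    · exact iff_of_true h h'
    · exact iff_of_false h (not_not.2 h')
  set c := ((KK m n).induce (R ×ˢ Cᶜ ∪ Rᶜ ×ˢ C)).connectedComponentMk ⟨x, .inl hx⟩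
  rcases verts_subset_prod_or_subset_compl_prod hA c with h | h <;>
    rw [verts_eq_of_preconnected hconn.preconnected c] at h
  · exact hy.1 (h (.inr hy)).1
  · exact (h (.inl hx)).1 hx.1

theorem connected_prod_compl_union_compl_prod_union {R : Set (Fin m)} {C : Set (Fin n)}
    {E : Set (Fin m × Fin n)} (hE : E ⊆ Rᶜ ×ˢ Cᶜ) (hR : R.Nonempty) (hE₀ : E.Nonempty) :
    ((KK m n).induce (R ×ˢ Cᶜ ∪ Rᶜ ×ˢ C ∪ E)).Connected := by
  obtain ⟨r, hr⟩ := hR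
  obtain ⟨e, he⟩ := hE₀
  have he' := hE he
  rw [connected_iff_exists_forall_reachable]
  refine ⟨⟨e, .inr he⟩, fun ⟨w, hw⟩ => ?_⟩
  rcases hw with (hw | hw) | hw
  · exact (reachable_of_corner_mem (.inl (.inl ⟨hw.1, he'.2⟩))).symm
  · exact reachable_of_corner_mem (.inl (.inr ⟨he'.1, hw.2⟩))
  · have hre : (r, e.2) ∈ R ×ˢ Cᶜ ∪ Rᶜ ×ˢ C ∪ E := .inl (.inl ⟨hr, he'.2⟩)
    exact (reachable_of_fst_eq_or_snd_eq (x := ⟨e, .inr he⟩) (y := ⟨_, hre⟩) (.inr rfl)).trans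
      (reachable_of_corner_mem (y := ⟨w, .inr hw⟩) (.inl (.inl ⟨hr, (hE hw).2⟩)))

theorem isConnectedSafeSet_of_coe_eq {R : Set (Fin m)} {C : Set (Fin n)}
    {E : Set (Fin m × Fin n)} (S : Finset (Fin m × Fin n))
    (hS : (S : Set (Fin m × Fin n)) = R ×ˢ Cᶜ ∪ Rᶜ ×ˢ C ∪ E) (hE : E ⊆ Rᶜ ×ˢ Cᶜ)
    (hR : R.Nonempty) (hE₀ : E.Nonempty) (h₁ : R.ncard * C.ncard ≤ S.card)
    (h₂ : Rᶜ.ncard * Cᶜ.ncard ≤ S.card + E.ncard) : IsConnectedSafeSet (KK m n) S := by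
  refine isConnectedSafeSet_iff.2
    ⟨by rw [hS]; exact connected_prod_compl_union_compl_prod_union hE hR hE₀, fun D _ => ?_⟩
  have hT : ∀ z ∈ (S : Set (Fin m × Fin n))ᶜ, (z.1 ∈ R ↔ z.2 ∈ C) := by
    intro z hz
    simp only [hS, Set.mem_compl_iff, Set.mem_union, Set.mem_prod] at hz
    tauto
  rcases verts_subset_prod_or_subset_compl_prod hT D with h | h
  · exact (Set.ncard_le_ncard h).trans (Set.ncard_prod ▸ h₁)
  · have hsub : D.verts ⊆ (Rᶜ ×ˢ Cᶜ) \ E :=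
      fun z hz => ⟨h hz, fun hzE => D.verts_subset hz (hS ▸ .inr hzE)⟩
    have := Set.ncard_le_ncard hsub
    rw [Set.ncard_sdiff hE, Set.ncard_prod] at this
    omega

def rows (c : ((KK m n).induce A).ConnectedComponent) : Set (Fin m) := Prod.fst '' c.verts

def cols (c : ((KK m n).induce A).ConnectedComponent) : Set (Fin n) := Prod.snd '' c.verts

theorem eq_of_mem_rows {c c' : ((KK m n).induce A).ConnectedComponent} {i : Fin m}
    (h : i ∈ rows c) (h' : i ∈ rows c') : c = c' := by
  obtain ⟨z, hz, rfl⟩ := h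
  obtain ⟨w, hw, hwz⟩ := h'
  obtain ⟨-, rfl⟩ := mem_verts.1 hz
  obtain ⟨-, rfl⟩ := mem_verts.1 hw
  exact ConnectedComponent.sound (reachable_of_fst_eq_or_snd_eq (.inl hwz.symm))

theorem eq_of_mem_cols {c c' : ((KK m n).induce A).ConnectedComponent} {j : Fin n}
    (h : j ∈ cols c) (h' : j ∈ cols c') : c = c' := by
  obtain ⟨z, hz, rfl⟩ := h
  obtain ⟨w, hw, hwz⟩ := h'
  obtain ⟨-, rfl⟩ := mem_verts.1 hz
  obtain ⟨-, rfl⟩ := mem_verts.1 hw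
  exact ConnectedComponent.sound (reachable_of_fst_eq_or_snd_eq (.inr hwz.symm))

theorem mem_verts_of_fst_mem_rows {c : ((KK m n).induce A).ConnectedComponent}
    {z : Fin m × Fin n} (hz : z ∈ A) (h : z.1 ∈ rows c) : z ∈ c.verts :=
  eq_of_mem_rows ⟨z, mem_verts_connectedComponentMk ⟨z, hz⟩, rfl⟩ h ▸
    mem_verts_connectedComponentMk ⟨z, hz⟩

theorem mem_verts_of_snd_mem_cols {c : ((KK m n).induce A).ConnectedComponent}
    {z : Fin m × Fin n} (hz : z ∈ A) (h : z.2 ∈ cols c) : z ∈ c.verts :=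
  eq_of_mem_cols ⟨z, mem_verts_connectedComponentMk ⟨z, hz⟩, rfl⟩ h ▸
    mem_verts_connectedComponentMk ⟨z, hz⟩

theorem verts_subset_rows_prod_cols (c : ((KK m n).induce A).ConnectedComponent) :
    c.verts ⊆ rows c ×ˢ cols c :=
  fun z hz => ⟨⟨z, hz, rfl⟩, ⟨z, hz, rfl⟩⟩

theorem rows_prod_compl_union_compl_prod_cols_subset_compl
    (c : ((KK m n).induce A).ConnectedComponent) :
    rows c ×ˢ (cols c)ᶜ ∪ (rows c)ᶜ ×ˢ cols c ⊆ Aᶜ := by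
  rintro z (⟨hr, hc⟩ | ⟨hr, hc⟩) hz
  · exact hc ⟨z, mem_verts_of_fst_mem_rows hz hr, rfl⟩
  · exact hr ⟨z, mem_verts_of_snd_mem_cols hz hc, rfl⟩

theorem diff_verts_subset_compl_rows_prod_compl_cols
    (c : ((KK m n).induce A).ConnectedComponent) :
    A \ c.verts ⊆ (rows c)ᶜ ×ˢ (cols c)ᶜ :=
  fun _ ⟨hz, hzc⟩ => ⟨fun h => hzc (mem_verts_of_fst_mem_rows hz h),
    fun h => hzc (mem_verts_of_snd_mem_cols hz h)⟩

/-- The other components `c'` have pairwise disjoint row sets avoiding `rows c` (and likewise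
for columns), and by maximality
`|rows c'| * |cols c'| ≤ |rows c'| * |cols c| + |rows c| * |cols c'|`. -/
theorem ncard_diff_verts_le (c : ((KK m n).induce A).ConnectedComponent)
    (hmax : ∀ c' : ((KK m n).induce A).ConnectedComponent,
      (rows c').ncard * (cols c').ncard ≤ (rows c).ncard * (cols c).ncard) :
    (A \ c.verts).ncard ≤ (rows c).ncard * (cols c)ᶜ.ncard + (rows c)ᶜ.ncard * (cols c).ncard := by
  classical
  set others := Finset.univ.erase c
  have hcover : A \ c.verts ⊆ ⋃ c' ∈ others, c'.verts := by
    rintro z ⟨hz, hzc⟩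
    refine Set.mem_biUnion (Finset.mem_erase.2 ⟨fun h => hzc ?_, Finset.mem_univ _⟩)
      (mem_verts_connectedComponentMk ⟨z, hz⟩)
    exact h ▸ mem_verts_connectedComponentMk ⟨z, hz⟩
  have hrows : ∑ c' ∈ others, (rows c').ncard ≤ (rows c)ᶜ.ncard :=
    sum_ncard_le_ncard_of_pairwiseDisjoint others
      (fun _ _ _ _ hne => Set.disjoint_left.2 fun _ h h' => hne (eq_of_mem_rows h h'))
      fun _ hc' _ h h' => Finset.ne_of_mem_erase hc' (eq_of_mem_rows h h')
  have hcols : ∑ c' ∈ others, (cols c').ncard ≤ (cols c)ᶜ.ncard :=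
    sum_ncard_le_ncard_of_pairwiseDisjoint others
      (fun _ _ _ _ hne => Set.disjoint_left.2 fun _ h h' => hne (eq_of_mem_cols h h'))
      fun _ hc' _ h h' => Finset.ne_of_mem_erase hc' (eq_of_mem_cols h h')
  calc (A \ c.verts).ncard ≤ ∑ c' ∈ others, c'.verts.ncard :=
        (Set.ncard_le_ncard hcover).trans (others.set_ncard_biUnion_le _)
    _ ≤ ∑ c' ∈ others, ((rows c').ncard * (cols c).ncard + (rows c).ncard * (cols c').ncard) :=
        Finset.sum_le_sum fun c' _ => (Set.ncard_le_ncard (verts_subset_rows_prod_cols c')).trans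
          (Set.ncard_prod.trans_le (mul_le_add_of_mul_le_mul (hmax c')))
    _ = (∑ c' ∈ others, (rows c').ncard) * (cols c).ncard +
          (rows c).ncard * ∑ c' ∈ others, (cols c').ncard := by
        rw [Finset.sum_add_distrib, Finset.sum_mul, Finset.mul_sum]
    _ ≤ (rows c).ncard * (cols c)ᶜ.ncard + (rows c)ᶜ.ncard * (cols c).ncard := by
        rw [add_comm]
        gcongr

theorem alpha_le_card_of_not_preconnected (hS : IsConnectedSafeSet (KK m n) S)
    (hT : ¬((KK m n).induce (S : Set (Fin m × Fin n))ᶜ).Preconnected) : alpha m n ≤ S.card := by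
  obtain ⟨x, y, hxy⟩ : ∃ x y, ¬((KK m n).induce (S : Set (Fin m × Fin n))ᶜ).Reachable x y := by
    simpa [Preconnected] using hT
  have hG := connected (Fin.pos x.1.1) (Fin.pos x.1.2)
  have : Nonempty ((KK m n).induce (S : Set (Fin m × Fin n))ᶜ).ConnectedComponent := ⟨.mk _ x⟩
  obtain ⟨D, hD⟩ := Finite.exists_max
    fun c : ((KK m n).induce (S : Set (Fin m × Fin n))ᶜ).ConnectedComponent =>
      (rows c).ncard * (cols c).ncard
  obtain ⟨c₀, hne⟩ : ∃ c₀, c₀ ≠ D := by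
    by_contra! h
    exact hxy (ConnectedComponent.exact ((h (.mk _ x)).trans (h (.mk _ y)).symm))
  obtain ⟨z, hz⟩ := D.verts_nonempty
  obtain ⟨z₀, hz₀⟩ := c₀.verts_nonempty
  have hr₀ : z₀.1 ∉ rows D := fun h => hne (eq_of_mem_rows ⟨z₀, hz₀, rfl⟩ h)
  have hc₀ : z₀.2 ∉ cols D := fun h => hne (eq_of_mem_cols ⟨z₀, hz₀, rfl⟩ h)
  have hcross : rows D ×ˢ (cols D)ᶜ ∪ (rows D)ᶜ ×ˢ cols D ⊂ S := by
    refine ssubset_of_subset_of_ne ((rows_prod_compl_union_compl_prod_cols_subset_compl D).trans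
      (compl_compl _).subset) fun h => ?_
    refine not_connected_prod_compl_union_compl_prod (R := rows D) (C := cols D)
      ⟨(z.1, z₀.2), ⟨z, hz, rfl⟩, hc₀⟩ ⟨(z₀.1, z.2), hr₀, ⟨z, hz, rfl⟩⟩ ?_
    rw [h]
    exact hS.2
  have htot := Set.ncard_add_ncard_compl (S : Set (Fin m × Fin n))
  rw [← Set.ncard_sdiff_add_ncard_of_subset D.verts_subset, Set.ncard_coe_finset] at htot
  refine alpha_le_of_counts ((Set.ncard_pos (s := rows D)).2 ⟨z.1, z, hz, rfl⟩)
    ((Set.ncard_pos (s := (rows D)ᶜ)).2 ⟨z₀.1, hr₀⟩)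
    ((Set.ncard_pos (s := cols D)).2 ⟨z.2, z, hz, rfl⟩)
    ((Set.ncard_pos (s := (cols D)ᶜ)).2 ⟨z₀.2, hc₀⟩)
    (by rw [Set.ncard_add_ncard_compl, Nat.card_fin])
    (by rw [Set.ncard_add_ncard_compl, Nat.card_fin])
    (by simpa [add_assoc, add_comm] using htot) (hS.ncard_verts_le hG D)
    ((Set.ncard_le_ncard (verts_subset_rows_prod_cols D)).trans_eq Set.ncard_prod)
    ((Set.ncard_le_ncard (diff_verts_subset_compl_rows_prod_compl_cols D)).trans_eq
      Set.ncard_prod)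
    (ncard_diff_verts_le D hD) ?_
  rw [← ncard_prod_compl_union_compl_prod, ← Set.ncard_coe_finset]
  exact Set.ncard_lt_ncard hcross

theorem alpha_le_card (hm : 3 ≤ m) (hn : 3 ≤ n) (hS : IsConnectedSafeSet (KK m n) S) :
    alpha m n ≤ S.card := by
  by_cases hT : ((KK m n).induce (S : Set (Fin m × Fin n))ᶜ).Preconnected
  · refine alpha_le_of_mul_le_two_mul hm hn ?_
    simpa using hS.card_le_two_mul (connected (by omega) (by omega)) hT
  · exact alpha_le_card_of_not_preconnected hS hT

theorem connectedSafeNumber_le_of_alphaExpr (hm₁ : 0 < m₁) (hm₂ : 0 < m₂) (hn₂ : 0 < n₂)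
    (hord : m₁ * n₁ ≤ m₂ * n₂) {k : ℕ}
    (hk : (k : ℤ) = alphaExpr (m₁ + m₂) (n₁ + n₂) m₁ m₂ n₁ n₂) :
    connectedSafeNumber (KK (m₁ + m₂) (n₁ + n₂)) ≤ k := by
  classical
  obtain ⟨hk₁, hk₂⟩ := (alphaExpr_le_iff rfl rfl).1 hk.ge
  have hk₃ : k ≤ m₁ * n₂ + m₂ * n₁ + m₂ * n₂ := by
    have h := (alphaExpr_le_iff rfl rfl (c := ((m₁ * n₂ + m₂ * n₁ + m₂ * n₂ : ℕ) : ℤ))).2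
      ⟨by push_cast; rw [max_eq_right (by exact_mod_cast hord)]; nlinarith, by push_cast; nlinarith⟩
    exact_mod_cast hk ▸ h
  have hcross : m₁ * n₁ ≤ m₁ * n₂ + m₂ * n₁ := mul_le_add_of_mul_le_mul hord
  obtain ⟨R, -, hR⟩ := Set.exists_subset_card_eq (s := (Set.univ : Set (Fin (m₁ + m₂))))
    (n := m₁) (by simp)
  obtain ⟨C, -, hC⟩ := Set.exists_subset_card_eq (s := (Set.univ : Set (Fin (n₁ + n₂))))
    (n := n₁) (by simp)
  have hRc : Rᶜ.ncard = m₂ := by rw [Set.ncard_compl, hR, Nat.card_fin]; omega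
  have hCc : Cᶜ.ncard = n₂ := by rw [Set.ncard_compl, hC, Nat.card_fin]; omega
  obtain ⟨E, hE, hEcard⟩ := Set.exists_subset_card_eq (s := Rᶜ ×ˢ Cᶜ)
    (n := k - (m₁ * n₂ + m₂ * n₁)) (by rw [Set.ncard_prod, hRc, hCc]; omega)
  have hScard : (R ×ˢ Cᶜ ∪ Rᶜ ×ˢ C ∪ E).toFinset.card = k := by
    rw [← Set.ncard_eq_toFinset_card', Set.ncard_union_eq (Set.disjoint_left.2 fun z hz hzE => by
        rcases hz with hz | hz
        exacts [(hE hzE).1 hz.1, (hE hzE).2 hz.2]),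
      ncard_prod_compl_union_compl_prod, hR, hC, hRc, hCc, hEcard]
    omega
  refine Nat.sInf_le ⟨_, isConnectedSafeSet_of_coe_eq _ (Set.coe_toFinset _) hE
    (Set.nonempty_of_ncard_ne_zero (by omega)) (Set.nonempty_of_ncard_ne_zero (by omega)) ?_ ?_,
    hScard⟩
  · rw [hR, hC, hScard]
    omega
  · rw [hRc, hCc, hScard, hEcard]
    have : (m₂ * n₂ : ℤ) ≤ max ((m₁ : ℤ) * n₁) (m₂ * n₂) := le_max_right _ _
    omega

theorem connectedSafeNumber_le_alpha (hm : 2 ≤ m) (hn : 2 ≤ n) :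
    connectedSafeNumber (KK m n) ≤ alpha m n := by
  obtain ⟨m₁, m₂, n₁, n₂, h₁, h₂, h₃, h₄, rfl, rfl, hα⟩ := exists_alphaExpr_eq_alpha hm hn
  rcases le_total (m₁ * n₁) (m₂ * n₂) with hord | hord
  · exact connectedSafeNumber_le_of_alphaExpr h₁ h₂ h₄ hord hα
  · rw [add_comm m₁, add_comm n₁] at hα ⊢
    rw [alphaExpr_comm] at hα
    exact connectedSafeNumber_le_of_alphaExpr h₂ h₁ h₃ hord hα

end KK

theorem connected_safe_number_eq_alpha (m n : ℕ) (hm : 3 ≤ m) (hn : 3 ≤ n) :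
    connectedSafeNumber (KK m n) = alpha m n := by
  obtain ⟨S, hS, hcard⟩ :=
    exists_isConnectedSafeSet_card_eq_connectedSafeNumber (KK.connected (m := m) (n := n)
      (by omega) (by omega))
  exact (KK.connectedSafeNumber_le_alpha (by omega) (by omega)).antisymm
    (hcard ▸ KK.alpha_le_card hm hn hS)
end
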